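/- Under Assumptions (A) and (B), for every compact set K ⊂ [0,T) × ℝ^d and every r > 0 there exist constants C > 0, c > 0 and λ₀ > 0 such that for every λ ∈ (0, λ₀], sup_{(t,x) ∈ K} ∫_{{y : ‖y − x*‖ ≥ r}} η_{λ,t,x}(y) dy ≤ C e^{−c/λ}. -/

import Mathlib

open MeasureTheory Real Filter Topology
open scoped RealInnerProductSpace

noncomputable section

/-- The heat kernel with diffusivity `β`: `G_r(z) = (4πβr)^(−d/2) exp(−‖z‖²/(4βr))`. -/
def heatK {d : ℕ} (β r : ℝ) (z : EuclideanSpace ℝ (Fin d)) : ℝ :=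
  (4 * π * β * r) ^ (-(d : ℝ) / 2) * Real.exp (-‖z‖ ^ 2 / (4 * β * r))

/-- The Laplacian of a scalar function on `ℝ^d`. -/
def lap {d : ℕ} (g : EuclideanSpace ℝ (Fin d) → ℝ) (x : EuclideanSpace ℝ (Fin d)) : ℝ :=
  ∑ i : Fin d,
    fderiv ℝ (fun z => fderiv ℝ g z (EuclideanSpace.single i 1)) x (EuclideanSpace.single i 1)

/-- The normalized Gibbs density `π_λ(y) = e^{−α_λ f(y)} / M_λ`, with `α_λ = T/(2λβ)`. -/
def gibbsDen {d : ℕ} (T β lam : ℝ) (f : EuclideanSpace ℝ (Fin d) → ℝ)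
    (y : EuclideanSpace ℝ (Fin d)) : ℝ :=
  Real.exp (-(T / (2 * lam * β)) * f y) / ∫ z, Real.exp (-(T / (2 * lam * β)) * f z)

/-- `h_λ(t,x) = ∫ G_{T−t}(x−y) π_λ(y) dy`. -/
def hHC {d : ℕ} (T β lam : ℝ) (f : EuclideanSpace ℝ (Fin d) → ℝ) (t : ℝ)
    (x : EuclideanSpace ℝ (Fin d)) : ℝ :=
  ∫ y, heatK β (T - t) (x - y) * gibbsDen T β lam f y

/-- The conditional terminal density `η_{λ,t,x}(y) = G_{T−t}(x−y) π_λ(y) / h_λ(t,x)`. -/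
def etaHC {d : ℕ} (T β lam : ℝ) (f : EuclideanSpace ℝ (Fin d) → ℝ) (t : ℝ)
    (x y : EuclideanSpace ℝ (Fin d)) : ℝ :=
  heatK β (T - t) (x - y) * gibbsDen T β lam f y / hHC T β lam f t x

/-- The barycenter `a_λ(t,x) = ∫ y η_{λ,t,x}(y) dy`. -/
def aHC {d : ℕ} (T β lam : ℝ) (f : EuclideanSpace ℝ (Fin d) → ℝ) (t : ℝ)
    (x : EuclideanSpace ℝ (Fin d)) : EuclideanSpace ℝ (Fin d) :=
  ∫ y, etaHC T β lam f t x y • y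

/-- The optimal drift `u*_λ(t,x) = 2β ∇_x log h_λ(t,x)`. -/
def uHC {d : ℕ} (T β lam : ℝ) (f : EuclideanSpace ℝ (Fin d) → ℝ) (t : ℝ)
    (x : EuclideanSpace ℝ (Fin d)) : EuclideanSpace ℝ (Fin d) :=
  (2 * β) • gradient (fun z => Real.log (hHC T β lam f t z)) x

/-- The potential `Φ_λ(t,x) = −2β log h_λ(t,x)`. -/
def PhiHC {d : ℕ} (T β lam : ℝ) (f : EuclideanSpace ℝ (Fin d) → ℝ) (t : ℝ)
    (x : EuclideanSpace ℝ (Fin d)) : ℝ :=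
  -(2 * β) * Real.log (hHC T β lam f t x)

/-- The value function `V_λ(t,x) = −(2λβ/T) log h_λ(t,x) − (2λβ/T) log M_λ`. -/
def VHC {d : ℕ} (T β lam : ℝ) (f : EuclideanSpace ℝ (Fin d) → ℝ) (t : ℝ)
    (x : EuclideanSpace ℝ (Fin d)) : ℝ :=
  -(2 * lam * β / T) * Real.log (hHC T β lam f t x)
    - (2 * lam * β / T) * Real.log (∫ z, Real.exp (-(T / (2 * lam * β)) * f z))

/-! The density `η_{λ,t,x}` is the Gibbs density `e^{-α f}` reweighted by `y ↦ G_{T-t}(x - y)`,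
which is bounded above uniformly for `(t, x) ∈ K` and bounded below uniformly on any fixed ball.
Coercivity and uniqueness of the minimizer give a gap `f ≥ f* + δ` on `{‖y - x*‖ ≥ r}`, while
`f ≤ f* + δ/2` on a small ball around `x*`. Comparing the mass of the far region with the mass of
that ball bounds the ratio by a constant times `e^{-α δ/2} = e^{-T δ/(4 β λ)}`. -/

open scoped ENNReal

theorem exists_pos_add_le_of_tendsto_cocompact {X : Type*} [TopologicalSpace X] {f : X → ℝ}
    {x₀ : X} {S : Set X} (hf : Continuous f) (hcoer : Tendsto f (cocompact X) atTop)
    (hmin : ∀ y, f x₀ ≤ f y) (huniq : ∀ y, f y = f x₀ → y = x₀) (hS : IsClosed S)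
    (hx₀ : x₀ ∉ S) : ∃ δ > 0, ∀ y ∈ S, f x₀ + δ ≤ f y := by
  rcases S.eq_empty_or_nonempty with rfl | ⟨y₁, hy₁⟩
  · exact ⟨1, one_pos, by simp⟩
  obtain ⟨y₀, hy₀S, hy₀⟩ := hf.continuousOn.exists_isMinOn' hS hy₁
    ((hcoer.eventually (eventually_ge_atTop (f y₁))).filter_mono inf_le_left)
  have hlt : f x₀ < f y₀ := (hmin y₀).lt_of_ne fun h => hx₀ (huniq y₀ h.symm ▸ hy₀S)
  exact ⟨f y₀ - f x₀, sub_pos.2 hlt, fun y hy => by linarith [isMinOn_iff.1 hy₀ y hy]⟩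

section LaplaceBound

variable {X : Type*} [MeasurableSpace X] {μ : Measure X} {g f : X → ℝ} {S B : Set X}
  {α A m a b : ℝ}

theorem setIntegral_mul_exp_le (hα : 1 ≤ α) (hS : MeasurableSet S) (hA : 0 ≤ A)
    (hg0 : ∀ x, 0 ≤ g x) (hgA : ∀ x, g x ≤ A) (hfS : ∀ x ∈ S, b ≤ f x)
    (h1 : Integrable (fun x => exp (-f x)) μ) :
    ∫ x in S, g x * exp (-α * f x) ∂μ ≤ A * exp (-(α - 1) * b) * ∫ x, exp (-f x) ∂μ := by
  have hpt : ∀ x ∈ S, g x * exp (-α * f x) ≤ A * exp (-(α - 1) * b) * exp (-f x) := by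
    intro x hx
    -- `e^{-f}` carries the integrability, `e^{-(α-1) f}` the smallness on `S`
    have hsplit : exp (-α * f x) = exp (-(α - 1) * f x) * exp (-f x) := by
      rw [← exp_add]; ring_nf
    rw [hsplit, ← mul_assoc]
    gcongr ?_ * exp ?_ * _
    · exact hgA x
    · nlinarith [hfS x hx]
  calc ∫ x in S, g x * exp (-α * f x) ∂μ
      ≤ ∫ x in S, A * exp (-(α - 1) * b) * exp (-f x) ∂μ :=
        integral_mono_of_nonneg (ae_of_all _ fun x => mul_nonneg (hg0 x) (exp_pos _).le)
          (h1.const_mul _).integrableOn (ae_restrict_of_forall_mem hS hpt)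
    _ ≤ ∫ x, A * exp (-(α - 1) * b) * exp (-f x) ∂μ :=
        setIntegral_le_integral (h1.const_mul _) (ae_of_all _ fun x => by positivity)
    _ = A * exp (-(α - 1) * b) * ∫ x, exp (-f x) ∂μ := integral_const_mul _ _

theorem mul_exp_mul_measureReal_le_integral (hα : 0 ≤ α) (hB : MeasurableSet B)
    (hBfin : μ B ≠ ∞) (hg0 : ∀ x, 0 ≤ g x) (hgm : ∀ x ∈ B, m ≤ g x) (hfB : ∀ x ∈ B, f x ≤ a)
    (hint : Integrable (fun x => g x * exp (-α * f x)) μ) :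
    m * exp (-α * a) * μ.real B ≤ ∫ x, g x * exp (-α * f x) ∂μ := by
  have hpt : ∀ x ∈ B, m * exp (-α * a) ≤ g x * exp (-α * f x) := fun x hx =>
    mul_le_mul (hgm x hx) (exp_le_exp.2 (by nlinarith [hfB x hx])) (exp_pos _).le (hg0 x)
  calc m * exp (-α * a) * μ.real B ≤ ∫ x in B, g x * exp (-α * f x) ∂μ :=
        setIntegral_ge_of_const_le_real hB hBfin hpt hint.integrableOn
    _ ≤ ∫ x, g x * exp (-α * f x) ∂μ :=
        setIntegral_le_integral hint (ae_of_all _ fun x => mul_nonneg (hg0 x) (exp_pos _).le)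

theorem setIntegral_div_integral_mul_exp_le (hα : 1 ≤ α) (hS : MeasurableSet S)
    (hB : MeasurableSet B) (hBfin : μ B ≠ ∞) (hBpos : 0 < μ.real B) (hA : 0 ≤ A) (hm : 0 < m)
    (hg : AEStronglyMeasurable g μ) (hg0 : ∀ x, 0 ≤ g x) (hgA : ∀ x, g x ≤ A)
    (hgm : ∀ x ∈ B, m ≤ g x) (hfB : ∀ x ∈ B, f x ≤ a) (hfS : ∀ x ∈ S, b ≤ f x)
    (hαint : Integrable (fun x => exp (-α * f x)) μ) (h1 : Integrable (fun x => exp (-f x)) μ) :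
    (∫ x in S, g x * exp (-α * f x) ∂μ) / ∫ x, g x * exp (-α * f x) ∂μ ≤
      A * exp b * (∫ x, exp (-f x) ∂μ) / (m * μ.real B) * exp (-α * (b - a)) := by
  have hint : Integrable (fun x => g x * exp (-α * f x)) μ :=
    hαint.bdd_mul hg (ae_of_all _ fun x => by rw [Real.norm_of_nonneg (hg0 x)]; exact hgA x)
  have hI : 0 ≤ ∫ x, exp (-f x) ∂μ := integral_nonneg fun x => (exp_pos _).le
  calc (∫ x in S, g x * exp (-α * f x) ∂μ) / ∫ x, g x * exp (-α * f x) ∂μ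
      ≤ A * exp (-(α - 1) * b) * (∫ x, exp (-f x) ∂μ) / (m * exp (-α * a) * μ.real B) :=
        div_le_div₀ (by positivity) (setIntegral_mul_exp_le hα hS hA hg0 hgA hfS h1) (by positivity)
          (mul_exp_mul_measureReal_le_integral (by linarith) hB hBfin hg0 hgm hfB hint)
    _ = A * exp b * (∫ x, exp (-f x) ∂μ) / (m * μ.real B) * exp (-α * (b - a)) := by
        have hexp : exp (-(α - 1) * b) = exp b * exp (-α * (b - a)) * exp (-α * a) := by
          rw [← exp_add, ← exp_add]; ring_nf
        rw [hexp]
        field_simp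

end LaplaceBound

section HeatKernel

variable {d : ℕ} {β r ε T : ℝ}

theorem continuous_heatK (β r : ℝ) : Continuous (heatK (d := d) β r) := by
  unfold heatK; fun_prop

theorem heatK_nonneg (hβ : 0 < β) (hr : 0 < r) (z : EuclideanSpace ℝ (Fin d)) :
    0 ≤ heatK β r z := by
  unfold heatK; positivity

theorem heatK_le (hβ : 0 < β) (hε : 0 < ε) (hεr : ε ≤ r) (z : EuclideanSpace ℝ (Fin d)) :
    heatK β r z ≤ (4 * π * β * ε) ^ (-(d : ℝ) / 2) := by
  have hd : -(d : ℝ) / 2 ≤ 0 :=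
    div_nonpos_of_nonpos_of_nonneg (neg_nonpos.2 d.cast_nonneg) zero_le_two
  have hr : 0 < r := hε.trans_le hεr
  calc heatK β r z ≤ (4 * π * β * r) ^ (-(d : ℝ) / 2) * 1 := by
        unfold heatK
        refine mul_le_mul_of_nonneg_left (exp_le_one_iff.2 ?_) (by positivity)
        exact div_nonpos_of_nonpos_of_nonneg (by simp) (by positivity)
    _ ≤ (4 * π * β * ε) ^ (-(d : ℝ) / 2) := by
        rw [mul_one]
        exact rpow_le_rpow_of_nonpos (by positivity) (by gcongr) hd

theorem le_heatK (hβ : 0 < β) (hε : 0 < ε) (hεr : ε ≤ r) (hrT : r ≤ T)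
    {z : EuclideanSpace ℝ (Fin d)} {R : ℝ} (hz : ‖z‖ ≤ R) :
    (4 * π * β * T) ^ (-(d : ℝ) / 2) * exp (-R ^ 2 / (4 * β * ε)) ≤ heatK β r z := by
  have hd : -(d : ℝ) / 2 ≤ 0 :=
    div_nonpos_of_nonpos_of_nonneg (neg_nonpos.2 d.cast_nonneg) zero_le_two
  have hr : 0 < r := hε.trans_le hεr
  unfold heatK
  refine mul_le_mul (rpow_le_rpow_of_nonpos (by positivity) (by gcongr) hd) ?_ (by positivity)
    (by positivity)
  rw [exp_le_exp, neg_div, neg_div, neg_le_neg_iff]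
  gcongr

theorem IsCompact.exists_heatK_bounds {K : Set (ℝ × EuclideanSpace ℝ (Fin d))} (hK : IsCompact K)
    (hKT : K ⊆ Set.Ico 0 T ×ˢ Set.univ) (hT : 0 < T) (hβ : 0 < β) (R : ℝ) :
    ∃ A > 0, ∃ m > 0, ∀ p ∈ K,
      (∀ z : EuclideanSpace ℝ (Fin d), 0 ≤ heatK β (T - p.1) z ∧ heatK β (T - p.1) z ≤ A) ∧
      ∀ y, ‖y‖ ≤ R → m ≤ heatK β (T - p.1) (p.2 - y) := by
  obtain ⟨ε, hε, hεK⟩ := hK.exists_forall_le' (f := fun p => T - p.1) (by fun_prop)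
    fun p hp => sub_pos.2 (hKT hp).1.2
  obtain ⟨R₀, hR₀⟩ := hK.exists_bound_of_continuousOn continuous_snd.continuousOn
  refine ⟨(4 * π * β * ε) ^ (-(d : ℝ) / 2), rpow_pos_of_pos (by positivity) _,
    (4 * π * β * T) ^ (-(d : ℝ) / 2) * exp (-(R₀ + R) ^ 2 / (4 * β * ε)),
    mul_pos (rpow_pos_of_pos (by positivity) _) (exp_pos _), fun p hp => ⟨fun z => ?_, ?_⟩⟩
  · exact ⟨heatK_nonneg hβ (hε.trans_le (hεK p hp)) z, heatK_le hβ hε (hεK p hp) z⟩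
  · intro y hy
    exact le_heatK hβ hε (hεK p hp) (by linarith [(hKT hp).1.1])
      ((norm_sub_le _ _).trans (add_le_add (hR₀ p hp) hy))

end HeatKernel

theorem setIntegral_etaHC {d : ℕ} {T β lam : ℝ} {f : EuclideanSpace ℝ (Fin d) → ℝ}
    (hM : ∫ z, exp (-(T / (2 * lam * β)) * f z) ≠ 0) (S : Set (EuclideanSpace ℝ (Fin d)))
    (t : ℝ) (x : EuclideanSpace ℝ (Fin d)) :
    ∫ y in S, etaHC T β lam f t x y =
      (∫ y in S, heatK β (T - t) (x - y) * exp (-(T / (2 * lam * β)) * f y)) /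
        ∫ y, heatK β (T - t) (x - y) * exp (-(T / (2 * lam * β)) * f y) := by
  unfold etaHC hHC gibbsDen
  simp_rw [← mul_div_assoc, integral_div]
  exact div_div_div_cancel_right₀ hM _ _

theorem conditional_mass_concentration_general (d : ℕ) (T β : ℝ)
    (hT : 0 < T) (hβ : 0 < β)
    (f : EuclideanSpace ℝ (Fin d) → ℝ)
    (hf : ContDiff ℝ 2 f)
    (hcoer : Tendsto f (cocompact (EuclideanSpace ℝ (Fin d))) atTop)
    (hint : ∀ c > 0,
      Integrable (fun y => Real.exp (-c * f y)) ∧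
      Integrable (fun y => ‖gradient f y‖ * Real.exp (-c * f y)) ∧
      Integrable (fun y => ‖iteratedFDeriv ℝ 2 f y‖ * Real.exp (-c * f y)))
    (xstar : EuclideanSpace ℝ (Fin d))
    (hmin : ∀ y, f xstar ≤ f y)
    (huniq : ∀ y, f y = f xstar → y = xstar) :
    ∀ K : Set (ℝ × EuclideanSpace ℝ (Fin d)), IsCompact K →
      K ⊆ Set.Ico 0 T ×ˢ Set.univ →
      ∀ r > 0, ∃ C > 0, ∃ c > 0, ∃ lam₀ > 0, ∀ lam ∈ Set.Ioc (0:ℝ) lam₀,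
        ∀ p ∈ K,
          (∫ y in {y : EuclideanSpace ℝ (Fin d) | r ≤ ‖y - xstar‖},
              etaHC T β lam f p.1 p.2 y)
            ≤ C * Real.exp (-c / lam) := by
  intro K hK hKT r hr
  obtain ⟨δ, hδ, hgap⟩ := exists_pos_add_le_of_tendsto_cocompact hf.continuous hcoer hmin huniq
    (S := {y | r ≤ ‖y - xstar‖}) (isClosed_le continuous_const (by fun_prop)) (by simpa using hr)
  obtain ⟨ρ, hρ, hball⟩ := Metric.eventually_nhds_iff_ball.1 <|
    hf.continuous.continuousAt.eventually (gt_mem_nhds (by linarith : f xstar < f xstar + δ / 2))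
  obtain ⟨A, hA, m, hm, hheat⟩ := hK.exists_heatK_bounds hKT hT hβ (‖xstar‖ + ρ)
  have hB : 0 < volume.real (Metric.ball xstar ρ) :=
    ENNReal.toReal_pos (Metric.measure_ball_pos _ _ hρ).ne' measure_ball_lt_top.ne
  have h1 : Integrable fun y => exp (-f y) := by simpa using (hint 1 one_pos).1
  refine ⟨A * exp (f xstar + δ) * (∫ y, exp (-f y)) / (m * volume.real (Metric.ball xstar ρ)),
    by have := integral_exp_pos h1; positivity, T * δ / (4 * β), by positivity, T / (2 * β),
    by positivity, ?_⟩
  rintro lam ⟨hlam, hlam₀⟩ p hp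
  have hα : 1 ≤ T / (2 * lam * β) := by
    rw [le_div_iff₀ (by positivity)]
    have := (le_div_iff₀ (by positivity)).1 hlam₀
    linarith
  have hαint := (hint _ (by positivity : 0 < T / (2 * lam * β))).1
  rw [setIntegral_etaHC (integral_exp_pos hαint).ne']
  refine (setIntegral_div_integral_mul_exp_le (g := fun y => heatK β (T - p.1) (p.2 - y))
    (a := f xstar + δ / 2) hα (measurableSet_le (by fun_prop) (by fun_prop))
    measurableSet_ball measure_ball_lt_top.ne hB hA.le hm
    ((continuous_heatK _ _).comp (by fun_prop)).aestronglyMeasurable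
    (fun y => ((hheat p hp).1 _).1) (fun y => ((hheat p hp).1 _).2)
    (fun y hy => (hheat p hp).2 y ?_) (fun y hy => (hball y hy).le) hgap hαint h1).trans_eq ?_
  · exact (norm_le_norm_add_norm_sub' y xstar).trans (by linarith [mem_ball_iff_norm.1 hy])
  · rw [show -(T / (2 * lam * β)) * (f xstar + δ - (f xstar + δ / 2)) = -(T * δ / (4 * β)) / lam by
      field_simp; ring]

theorem conditional_mass_concentration (d : ℕ) (hd : 1 ≤ d) (T β : ℝ)
    (hT : 0 < T) (hβ : 0 < β)
    (f : EuclideanSpace ℝ (Fin d) → ℝ)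
    (hf : ContDiff ℝ 2 f)
    (hbdd : BddBelow (Set.range f))
    (hcoer : Tendsto f (cocompact (EuclideanSpace ℝ (Fin d))) atTop)
    (hint : ∀ c > 0,
      Integrable (fun y => Real.exp (-c * f y)) ∧
      Integrable (fun y => ‖gradient f y‖ * Real.exp (-c * f y)) ∧
      Integrable (fun y => ‖iteratedFDeriv ℝ 2 f y‖ * Real.exp (-c * f y)))
    (xstar : EuclideanSpace ℝ (Fin d))
    (hmin : ∀ y, f xstar ≤ f y)
    (huniq : ∀ y, f y = f xstar → y = xstar) :
    ∀ K : Set (ℝ × EuclideanSpace ℝ (Fin d)), IsCompact K →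
      K ⊆ Set.Ico 0 T ×ˢ Set.univ →
      ∀ r > 0, ∃ C > 0, ∃ c > 0, ∃ lam₀ > 0, ∀ lam ∈ Set.Ioc (0:ℝ) lam₀,
        ∀ p ∈ K,
          (∫ y in {y : EuclideanSpace ℝ (Fin d) | r ≤ ‖y - xstar‖},
              etaHC T β lam f p.1 p.2 y)
            ≤ C * Real.exp (-c / lam) :=
  conditional_mass_concentration_general d T β hT hβ f hf hcoer hint xstar hmin huniq
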